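/- Let γ ∈ (0, 1/2) and β ∈ (0,1). There exists a constant C_d > 0 such that for every integer N ≥ 1, every x ∈ [−1/2,1/2]^d, and every choice of points x₁, …, x_N ∈ [−1/2,1/2]^d, one has (1/N) ∑_{i=1}^N V^N(x − x_i) · d_T(x, x_i)^γ ≤ C_d · N^{−β(1−2γ)} + N^{−βγ²/d} · ρ^N(x), where ρ^N(x) = (1/N) ∑_{i=1}^N V^N(x − x_i) and d_T denotes the torus distance d_T(x,y) = min_{k ∈ ℤ^d} |x − y − k|. -/

import Mathlib

open MeasureTheory Real
open scoped NNReal BigOperators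

noncomputable section

/-- The mollifier `V₀` from the paper (assumption (Aᵛ)). -/
def V0 (d : ℕ) (y : EuclideanSpace ℝ (Fin d)) : ℝ :=
  if ‖y‖ ≤ 1/2 then Real.Gamma ((d:ℝ)/2) / (2 * Real.pi ^ ((d:ℝ)/2)) * Real.exp (-‖y‖^2)
  else Real.Gamma ((d:ℝ)/2) / (2 * Real.pi ^ ((d:ℝ)/2)) * Real.exp (1/4) * Real.exp (-‖y‖)

/-- The scaled mollifier `V₀^N(y) = N^β V₀(N^{β/d} y)`. -/
def V0N (d : ℕ) (β : ℝ) (N : ℕ) (y : EuclideanSpace ℝ (Fin d)) : ℝ :=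
  (N:ℝ)^β * V0 d ((N:ℝ)^(β/(d:ℝ)) • y)

/-- An integer vector `k ∈ ℤ^d` viewed as an element of `ℝ^d`. -/
def intVec (d : ℕ) (k : Fin d → ℤ) : EuclideanSpace ℝ (Fin d) := WithLp.toLp 2 (fun i => (k i : ℝ))

/-- The periodized mollifier `V^N(x) = ∑_{k ∈ ℤ^d} V₀^N(x - k)`. -/
def VN (d : ℕ) (β : ℝ) (N : ℕ) (x : EuclideanSpace ℝ (Fin d)) : ℝ :=
  ∑' k : Fin d → ℤ, V0N d β N (x - intVec d k)

/-- The fundamental domain `[0,1)^d` of the torus. -/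
def box01 (d : ℕ) : Set (EuclideanSpace ℝ (Fin d)) := {x | ∀ i, x i ∈ Set.Ico (0:ℝ) 1}

/-- The fundamental domain `[-1/2,1/2]^d` of the torus. -/
def boxC (d : ℕ) : Set (EuclideanSpace ℝ (Fin d)) := {x | ∀ i, x i ∈ Set.Icc (-(1/2):ℝ) (1/2)}

/-- The torus distance `d_T(x,y) = min_{k ∈ ℤ^d} |x - y - k|`. -/
def torusDist (d : ℕ) (x y : EuclideanSpace ℝ (Fin d)) : ℝ :=
  ⨅ k : Fin d → ℤ, ‖x - y - intVec d k‖

/-! ### Auxiliary lemmas -/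

lemma summable_exp_abs_int {c : ℝ} (hc : 0 < c) :
    Summable fun n : ℤ => Real.exp (-c * |(n : ℝ)|) := by
  have key : ∀ n : ℕ, Real.exp (-c * |((n : ℤ) : ℝ)|) = Real.exp (-c) ^ n := by
    intro n
    rw [Int.cast_natCast, Nat.abs_cast, ← Real.exp_nat_mul]
    ring_nf
  have hgeom : Summable fun n : ℕ => Real.exp (-c) ^ n :=
    summable_geometric_of_lt_one (Real.exp_nonneg _) (Real.exp_lt_one_iff.mpr (by linarith))
  apply Summable.of_nat_of_neg
  · exact hgeom.congr fun n => (key n).symm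
  · refine hgeom.congr fun n => ?_
    rw [← key n]
    congr 1
    simp

lemma summable_pi_prod {g : ℤ → ℝ} (hg : Summable g) (hg0 : ∀ n, 0 ≤ g n) :
    ∀ d : ℕ, Summable fun k : Fin d → ℤ => ∏ i, g (k i) := by
  intro d
  induction d with
  | zero => exact Summable.of_finite
  | succ n ih =>
    set e : ℤ × (Fin n → ℤ) ≃ (Fin (n+1) → ℤ) := (Fin.consEquiv fun _ => ℤ) with he
    rw [← e.summable_iff]
    have heq : ((fun k : Fin (n+1) → ℤ => ∏ i, g (k i)) ∘ e)
        = fun p : ℤ × (Fin n → ℤ) => g p.1 * ∏ i, g (p.2 i) := by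
      funext p
      simp only [Function.comp_apply, he, Fin.consEquiv_apply]
      rw [Fin.prod_univ_succ]
      simp [Fin.cons_succ]
    rw [heq]
    exact Summable.mul_of_nonneg (f := g) (g := fun k : Fin n → ℤ => ∏ i, g (k i)) hg ih
      (fun m => hg0 m) (fun k => Finset.prod_nonneg fun i _ => hg0 _)

/-- The constant in the exponential upper bound for `V₀`. -/
def Cb (d : ℕ) : ℝ := Real.Gamma ((d:ℝ)/2) / (2 * Real.pi ^ ((d:ℝ)/2)) * Real.exp (1/4)

lemma Cb_pos {d : ℕ} (hd : 1 ≤ d) : 0 < Cb d := by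
  have h1 : (0:ℝ) < (d:ℝ)/2 := by
    have : (0:ℝ) < (d:ℝ) := by exact_mod_cast hd
    linarith
  have h2 : (0:ℝ) < Real.pi ^ ((d:ℝ)/2) := Real.rpow_pos_of_pos Real.pi_pos _
  exact mul_pos (div_pos (Real.Gamma_pos_of_pos h1) (by linarith)) (Real.exp_pos _)

lemma V0_nonneg {d : ℕ} (hd : 1 ≤ d) (y : EuclideanSpace ℝ (Fin d)) : 0 ≤ V0 d y := by
  have h1 : (0:ℝ) < (d:ℝ)/2 := by
    have : (0:ℝ) < (d:ℝ) := by exact_mod_cast hd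
    linarith
  have h2 : (0:ℝ) < Real.pi ^ ((d:ℝ)/2) := Real.rpow_pos_of_pos Real.pi_pos _
  have h3 := Real.Gamma_pos_of_pos h1
  unfold V0
  split <;> positivity

lemma V0N_nonneg {d : ℕ} (hd : 1 ≤ d) (β : ℝ) (N : ℕ) (y : EuclideanSpace ℝ (Fin d)) :
    0 ≤ V0N d β N y :=
  mul_nonneg (Real.rpow_nonneg (Nat.cast_nonneg N) β) (V0_nonneg hd _)

lemma VN_nonneg {d : ℕ} (hd : 1 ≤ d) (β : ℝ) (N : ℕ) (z : EuclideanSpace ℝ (Fin d)) :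
    0 ≤ VN d β N z :=
  tsum_nonneg fun k => V0N_nonneg hd β N _

lemma V0_le {d : ℕ} (hd : 1 ≤ d) (y : EuclideanSpace ℝ (Fin d)) :
    V0 d y ≤ Cb d * Real.exp (-‖y‖) := by
  have h1 : (0:ℝ) < (d:ℝ)/2 := by
    have : (0:ℝ) < (d:ℝ) := by exact_mod_cast hd
    linarith
  have h2 : (0:ℝ) < Real.pi ^ ((d:ℝ)/2) := Real.rpow_pos_of_pos Real.pi_pos _
  have h3 := Real.Gamma_pos_of_pos h1
  have hb : 0 < Real.Gamma ((d:ℝ)/2) / (2 * Real.pi ^ ((d:ℝ)/2)) := by positivity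
  unfold V0 Cb
  split
  · rw [mul_assoc, ← Real.exp_add]
    apply mul_le_mul_of_nonneg_left _ hb.le
    apply Real.exp_le_exp.mpr
    nlinarith [sq_nonneg (‖y‖ - 1/2)]
  · rw [mul_assoc]

lemma abs_coord_le_norm {d : ℕ} (v : EuclideanSpace ℝ (Fin d)) (i : Fin d) : |v i| ≤ ‖v‖ := by
  rw [EuclideanSpace.norm_eq, ← Real.sqrt_sq_eq_abs]
  apply Real.sqrt_le_sqrt
  have : v i ^ 2 = ‖v i‖ ^ 2 := by rw [Real.norm_eq_abs, sq_abs]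
  rw [this]
  exact Finset.single_le_sum (fun j _ => sq_nonneg ‖v j‖) (Finset.mem_univ i)

lemma sum_abs_le_norm {d : ℕ} (v : EuclideanSpace ℝ (Fin d)) : ∑ i, |v i| ≤ (d:ℝ) * ‖v‖ := by
  calc ∑ i, |v i| ≤ ∑ _i : Fin d, ‖v‖ := Finset.sum_le_sum fun i _ => abs_coord_le_norm v i
    _ = (d:ℝ) * ‖v‖ := by simp [mul_comm]

lemma norm_le_d {d : ℕ} (hd : 1 ≤ d) (v : EuclideanSpace ℝ (Fin d)) (hv : ∀ i, |v i| ≤ 1) :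
    ‖v‖ ≤ (d:ℝ) := by
  have hd1 : (1:ℝ) ≤ (d:ℝ) := by exact_mod_cast hd
  rw [EuclideanSpace.norm_eq]
  have h1 : ∑ i, ‖v i‖ ^ 2 ≤ (d:ℝ) := by
    calc ∑ i, ‖v i‖ ^ 2 ≤ ∑ _i : Fin d, (1:ℝ) := by
          apply Finset.sum_le_sum
          intro i _
          have := hv i
          rw [Real.norm_eq_abs]
          nlinarith [abs_nonneg (v i)]
      _ = (d:ℝ) := by simp
  calc Real.sqrt (∑ i, ‖v i‖ ^ 2) ≤ Real.sqrt ((d:ℝ)) := Real.sqrt_le_sqrt h1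
    _ ≤ (d:ℝ) := by
        nth_rewrite 2 [show (d:ℝ) = Real.sqrt ((d:ℝ)^2) from (Real.sqrt_sq (by linarith)).symm]
        exact Real.sqrt_le_sqrt (by nlinarith)

/-- The lattice constant `K_d`. -/
def Kd (d : ℕ) : ℝ := ∑' k : Fin d → ℤ, ∏ i, Real.exp (-(1/(2*(d:ℝ))) * |(k i : ℝ)|)

lemma summable_K {d : ℕ} (hd : 1 ≤ d) :
    Summable fun k : Fin d → ℤ => ∏ i, Real.exp (-(1/(2*(d:ℝ))) * |(k i : ℝ)|) := by
  have hdpos : (0:ℝ) < (d:ℝ) := by exact_mod_cast hd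
  exact summable_pi_prod (summable_exp_abs_int (by positivity)) (fun n => (Real.exp_nonneg _)) d

lemma Kd_nonneg (d : ℕ) : 0 ≤ Kd d :=
  tsum_nonneg fun k => Finset.prod_nonneg fun i _ => Real.exp_nonneg _

lemma exp_pointwise {d : ℕ} (hd : 1 ≤ d) {a r : ℝ} (ha : 1 ≤ a) (hr0 : 0 ≤ r)
    {z : EuclideanSpace ℝ (Fin d)} (hz : ‖z‖ ≤ (d:ℝ)) (k : Fin d → ℤ)
    (hrk : r ≤ ‖z - intVec d k‖) :
    Real.exp (-(a * ‖z - intVec d k‖)) ≤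
      Real.exp (-(a*r)/2) * Real.exp (d:ℝ) * ∏ i, Real.exp (-(1/(2*(d:ℝ))) * |(k i : ℝ)|) := by
  have hdpos : (0:ℝ) < (d:ℝ) := by exact_mod_cast hd
  rw [← Real.exp_sum, ← Real.exp_add, ← Real.exp_add]
  apply Real.exp_le_exp.mpr
  set w := ‖z - intVec d k‖ with hw
  have hw0 : 0 ≤ w := norm_nonneg _
  have h1 : ∑ i, (-(1/(2*(d:ℝ))) * |(k i : ℝ)|) = -(1/(2*(d:ℝ))) * ∑ i, |(k i : ℝ)| := by
    rw [Finset.mul_sum]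
  rw [h1]
  have h2 : ∑ i, |(k i : ℝ)| ≤ (d:ℝ) * ‖intVec d k‖ := sum_abs_le_norm (intVec d k)
  have h3 : ‖intVec d k‖ ≤ ‖z‖ + w := by
    calc ‖intVec d k‖ = ‖z - (z - intVec d k)‖ := by congr 1; abel
      _ ≤ ‖z‖ + ‖z - intVec d k‖ := norm_sub_le _ _
  have h4 : (1/(2*(d:ℝ))) * ∑ i, |(k i : ℝ)| ≤ (‖z‖ + w)/2 := by
    have hstep := mul_le_mul_of_nonneg_left
      (h2.trans (by nlinarith : (d:ℝ) * ‖intVec d k‖ ≤ (d:ℝ) * (‖z‖ + w)))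
      (by positivity : (0:ℝ) ≤ 1/(2*(d:ℝ)))
    calc (1/(2*(d:ℝ))) * ∑ i, |(k i : ℝ)| ≤ (1/(2*(d:ℝ))) * ((d:ℝ) * (‖z‖ + w)) := hstep
      _ = (‖z‖ + w)/2 := by field_simp
  have h5 : a * r ≤ a * w := by nlinarith
  have h6 : w ≤ a * w := by nlinarith
  have hz0 : 0 ≤ ‖z‖ := norm_nonneg _
  linarith

lemma tsum_exp_bound {d : ℕ} (hd : 1 ≤ d) {a r : ℝ} (ha : 1 ≤ a) (hr0 : 0 ≤ r)
    {z : EuclideanSpace ℝ (Fin d)} (hz : ‖z‖ ≤ (d:ℝ)) (hrk : ∀ k, r ≤ ‖z - intVec d k‖) :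
    Summable (fun k : Fin d → ℤ => Real.exp (-(a * ‖z - intVec d k‖))) ∧
    ∑' k : Fin d → ℤ, Real.exp (-(a * ‖z - intVec d k‖)) ≤
      Real.exp (-(a*r)/2) * Real.exp (d:ℝ) * Kd d := by
  have hmaj : Summable fun k : Fin d → ℤ =>
      Real.exp (-(a*r)/2) * Real.exp (d:ℝ) * ∏ i, Real.exp (-(1/(2*(d:ℝ))) * |(k i : ℝ)|) :=
    (summable_K hd).mul_left _
  have hsum : Summable (fun k : Fin d → ℤ => Real.exp (-(a * ‖z - intVec d k‖))) :=
    Summable.of_nonneg_of_le (fun k => Real.exp_nonneg _)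
      (fun k => exp_pointwise hd ha hr0 hz k (hrk k)) hmaj
  refine ⟨hsum, ?_⟩
  calc ∑' k : Fin d → ℤ, Real.exp (-(a * ‖z - intVec d k‖))
      ≤ ∑' k : Fin d → ℤ, Real.exp (-(a*r)/2) * Real.exp (d:ℝ) *
          ∏ i, Real.exp (-(1/(2*(d:ℝ))) * |(k i : ℝ)|) :=
        Summable.tsum_le_tsum (fun k => exp_pointwise hd ha hr0 hz k (hrk k)) hsum hmaj
    _ = Real.exp (-(a*r)/2) * Real.exp (d:ℝ) * Kd d := tsum_mul_left

lemma VN_le {d : ℕ} (hd : 1 ≤ d) {β : ℝ} (hβ0 : 0 ≤ β) {N : ℕ} (hN : 1 ≤ N) {r : ℝ}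
    (hr0 : 0 ≤ r) {z : EuclideanSpace ℝ (Fin d)} (hz : ‖z‖ ≤ (d:ℝ))
    (hrk : ∀ k, r ≤ ‖z - intVec d k‖) :
    VN d β N z ≤ Cb d * Real.exp (d:ℝ) * Kd d *
      ((N:ℝ)^β * Real.exp (-((N:ℝ)^(β/(d:ℝ)) * r)/2)) := by
  have hN1 : (1:ℝ) ≤ (N:ℝ) := by exact_mod_cast hN
  have hdpos : (0:ℝ) < (d:ℝ) := by exact_mod_cast hd
  set a : ℝ := (N:ℝ)^(β/(d:ℝ)) with hadef
  have ha1 : 1 ≤ a := Real.one_le_rpow hN1 (by positivity)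
  have hNb : (0:ℝ) ≤ (N:ℝ)^β := Real.rpow_nonneg (by linarith) β
  have hpt : ∀ k : Fin d → ℤ, V0N d β N (z - intVec d k) ≤
      ((N:ℝ)^β * Cb d) * Real.exp (-(a * ‖z - intVec d k‖)) := by
    intro k
    have hnorm : ‖a • (z - intVec d k)‖ = a * ‖z - intVec d k‖ := by
      rw [norm_smul, Real.norm_eq_abs, abs_of_nonneg (by linarith)]
    calc V0N d β N (z - intVec d k)
        = (N:ℝ)^β * V0 d (a • (z - intVec d k)) := rfl
      _ ≤ (N:ℝ)^β * (Cb d * Real.exp (-‖a • (z - intVec d k)‖)) :=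
          mul_le_mul_of_nonneg_left (V0_le hd _) hNb
      _ = ((N:ℝ)^β * Cb d) * Real.exp (-(a * ‖z - intVec d k‖)) := by rw [hnorm]; ring
  obtain ⟨hsum, hbound⟩ := tsum_exp_bound hd ha1 hr0 hz hrk
  have hsum2 : Summable fun k : Fin d → ℤ =>
      ((N:ℝ)^β * Cb d) * Real.exp (-(a * ‖z - intVec d k‖)) := hsum.mul_left _
  have hsum1 : Summable fun k : Fin d → ℤ => V0N d β N (z - intVec d k) :=
    Summable.of_nonneg_of_le (fun k => V0N_nonneg hd β N _) hpt hsum2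
  have hCb := Cb_pos hd
  calc VN d β N z
      ≤ ∑' k : Fin d → ℤ, ((N:ℝ)^β * Cb d) * Real.exp (-(a * ‖z - intVec d k‖)) :=
        Summable.tsum_le_tsum hpt hsum1 hsum2
    _ = ((N:ℝ)^β * Cb d) * ∑' k : Fin d → ℤ, Real.exp (-(a * ‖z - intVec d k‖)) := tsum_mul_left
    _ ≤ ((N:ℝ)^β * Cb d) * (Real.exp (-(a*r)/2) * Real.exp (d:ℝ) * Kd d) := by
        apply mul_le_mul_of_nonneg_left hbound (by positivity)
    _ = Cb d * Real.exp (d:ℝ) * Kd d * ((N:ℝ)^β * Real.exp (-(a * r)/2)) := by ring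

lemma pow_le_factorial_mul_exp (x : ℝ) (hx : 0 ≤ x) (m : ℕ) :
    x ^ m ≤ (m.factorial : ℝ) * Real.exp x := by
  have h1 : x ^ m / (m.factorial : ℝ) ≤ ∑ i ∈ Finset.range (m+1), x ^ i / (i.factorial : ℝ) :=
    Finset.single_le_sum (f := fun i => x ^ i / (i.factorial : ℝ))
      (fun i _ => by positivity) (Finset.self_mem_range_succ m)
  have h2 := Real.sum_le_exp_of_nonneg hx (m+1)
  have h3 : x ^ m / (m.factorial : ℝ) ≤ Real.exp x := le_trans h1 (by exact_mod_cast h2)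
  have hm : (0:ℝ) < (m.factorial : ℝ) := by exact_mod_cast m.factorial_pos
  rw [div_le_iff₀ hm] at h3
  linarith

/-- the key moderate-interaction estimate
`(1/N) ∑_i V^N(x - x_i) d_T(x,x_i)^γ ≤ C_d N^{-β(1-2γ)} + N^{-βγ²/d} ρ^N(x)`. -/
theorem stmt8 (d : ℕ) (hd : 1 ≤ d) (γ β : ℝ) (hγ : γ ∈ Set.Ioo (0:ℝ) (1/2))
    (hβ : β ∈ Set.Ioo (0:ℝ) 1) :
    ∃ C : ℝ, 0 < C ∧ ∀ N : ℕ, 1 ≤ N → ∀ x ∈ boxC d,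
      ∀ p : Fin N → EuclideanSpace ℝ (Fin d), (∀ i, p i ∈ boxC d) →
        (1/(N:ℝ)) * ∑ i, VN d β N (x - p i) * torusDist d x (p i) ^ γ
          ≤ C * (N:ℝ) ^ (-(β * (1 - 2*γ)))
            + (N:ℝ) ^ (-(β * γ^2 / (d:ℝ))) * ((1/(N:ℝ)) * ∑ i, VN d β N (x - p i)) := by
  obtain ⟨hγ0, hγ2⟩ := hγ
  obtain ⟨hβ0, hβ1⟩ := hβ
  have hd1 : (1:ℝ) ≤ (d:ℝ) := by exact_mod_cast hd
  have hdpos : (0:ℝ) < (d:ℝ) := by linarith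
  have hCb := Cb_pos hd
  have hKd := Kd_nonneg d
  set A : ℝ := Cb d * Real.exp (d:ℝ) * Kd d with hA
  have hA0 : 0 ≤ A := by positivity
  set B : ℝ := (d:ℝ) * 2^(2*d) * (((2*d).factorial : ℝ)) with hB
  have hB0 : 0 ≤ B := by positivity
  refine ⟨A * B + 1, by positivity, ?_⟩
  intro N hN x hx p hp
  have hN1 : (1:ℝ) ≤ (N:ℝ) := by exact_mod_cast hN
  have hNpos : (0:ℝ) < (N:ℝ) := by linarith
  have hC0 : (0:ℝ) < A * B + 1 := by positivity
  have key : ∀ i, VN d β N (x - p i) * torusDist d x (p i) ^ γ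
      ≤ (A * B + 1) * (N:ℝ) ^ (-(β * (1 - 2*γ)))
        + (N:ℝ) ^ (-(β * γ^2 / (d:ℝ))) * VN d β N (x - p i) := by
    intro i
    set z : EuclideanSpace ℝ (Fin d) := x - p i with hzdef
    have hzcoord : ∀ j, |z j| ≤ 1 := by
      intro j
      have h1 := (hx j)
      have h2 := (hp i j)
      simp only [Set.mem_Icc] at h1 h2
      have : z j = x j - p i j := rfl
      rw [this, abs_le]
      constructor <;> linarith [h1.1, h1.2, h2.1, h2.2]
    have hz : ‖z‖ ≤ (d:ℝ) := norm_le_d hd z hzcoord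
    have hbdd : BddBelow (Set.range fun k : Fin d → ℤ => ‖x - p i - intVec d k‖) := by
      refine ⟨0, ?_⟩
      rintro w ⟨k, rfl⟩
      exact norm_nonneg _
    set r : ℝ := torusDist d x (p i) with hrdef
    have hr0 : 0 ≤ r := le_ciInf fun k => norm_nonneg _
    have hrk : ∀ k, r ≤ ‖z - intVec d k‖ := by
      intro k
      rw [hrdef]
      unfold torusDist
      exact ciInf_le hbdd k
    have hrz : r ≤ ‖z‖ := by
      have h0 := hrk 0
      have : intVec d 0 = 0 := by ext j; simp [intVec]
      rwa [this, sub_zero] at h0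
    have hVN0 : 0 ≤ VN d β N z := VN_nonneg hd β N z
    have hrg0 : 0 ≤ r ^ γ := Real.rpow_nonneg hr0 γ
    by_cases hcase : r ≤ (N:ℝ) ^ (-(β*γ/(d:ℝ)))
    · have h1 : r ^ γ ≤ (N:ℝ) ^ (-(β * γ^2 / (d:ℝ))) := by
        calc r ^ γ ≤ ((N:ℝ) ^ (-(β*γ/(d:ℝ)))) ^ γ := Real.rpow_le_rpow hr0 hcase hγ0.le
          _ = (N:ℝ) ^ (-(β * γ^2 / (d:ℝ))) := by
              rw [← Real.rpow_mul hNpos.le]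
              congr 1
              ring
      have h2 : VN d β N z * r ^ γ ≤ (N:ℝ) ^ (-(β * γ^2 / (d:ℝ))) * VN d β N z := by
        rw [mul_comm ((N:ℝ) ^ (-(β * γ^2 / (d:ℝ)))) (VN d β N z)]
        exact mul_le_mul_of_nonneg_left h1 hVN0
      have h3 : 0 ≤ (A * B + 1) * (N:ℝ) ^ (-(β * (1 - 2*γ))) :=
        mul_nonneg hC0.le (Real.rpow_nonneg hNpos.le _)
      linarith
    · push_neg at hcase
      set a : ℝ := (N:ℝ)^(β/(d:ℝ)) with hadef
      have ha0 : 0 < a := Real.rpow_pos_of_pos hNpos _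
      set t : ℝ := (N:ℝ)^(β*(1-γ)/(d:ℝ)) with htdef
      have ht0 : 0 ≤ t := (Real.rpow_pos_of_pos hNpos _).le
      have hta : t ≤ a * r := by
        have heq : a * (N:ℝ)^(-(β*γ/(d:ℝ))) = t := by
          rw [hadef, htdef, ← Real.rpow_add hNpos]
          congr 1
          field_simp
          ring
        calc t = a * (N:ℝ)^(-(β*γ/(d:ℝ))) := heq.symm
          _ ≤ a * r := mul_le_mul_of_nonneg_left hcase.le ha0.le
      have hrg : r ^ γ ≤ (d:ℝ) := by
        calc r ^ γ ≤ (d:ℝ) ^ γ := Real.rpow_le_rpow hr0 (hrz.trans hz) hγ0.le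
          _ ≤ (d:ℝ) ^ (1:ℝ) := Real.rpow_le_rpow_of_exponent_le hd1 (by linarith)
          _ = (d:ℝ) := Real.rpow_one _
      have hVle := VN_le hd hβ0.le hN hr0 hz hrk
      have hNb : (0:ℝ) ≤ (N:ℝ)^β := Real.rpow_nonneg hNpos.le β
      have hmain : VN d β N z * r ^ γ ≤ A * (d:ℝ) * ((N:ℝ)^β * Real.exp (-(a*r)/2)) := by
        calc VN d β N z * r ^ γ
            ≤ (A * ((N:ℝ)^β * Real.exp (-(a * r)/2))) * (d:ℝ) := by
              apply mul_le_mul hVle hrg hrg0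
              positivity
          _ = A * (d:ℝ) * ((N:ℝ)^β * Real.exp (-(a*r)/2)) := by ring
      have hexp : Real.exp (-(a*r)/2) ≤ Real.exp (-(t/2)) := by
        apply Real.exp_le_exp.mpr
        linarith
      have hN2 : (N:ℝ)^β * Real.exp (-(t/2))
          ≤ (2:ℝ)^(2*d) * (((2*d).factorial:ℝ)) * (N:ℝ)^(-(β*(1-2*γ))) := by
        have hid : (N:ℝ)^β * (N:ℝ)^(β*(1-2*γ)) = t ^ (2*d) := by
          rw [htdef, ← Real.rpow_add hNpos, ← Real.rpow_natCast ((N:ℝ)^(β*(1-γ)/(d:ℝ))) (2*d),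
            ← Real.rpow_mul hNpos.le]
          congr 1
          push_cast
          field_simp
          ring
        have hpow : t ^ (2*d) ≤ (2:ℝ)^(2*d) * (((2*d).factorial:ℝ) * Real.exp (t/2)) := by
          have h := pow_le_factorial_mul_exp (t/2) (by linarith) (2*d)
          calc t ^ (2*d) = (2:ℝ)^(2*d) * (t/2)^(2*d) := by
                rw [← mul_pow]
                ring_nf
            _ ≤ (2:ℝ)^(2*d) * (((2*d).factorial:ℝ) * Real.exp (t/2)) :=
                mul_le_mul_of_nonneg_left h (by positivity)
        have hE : (0:ℝ) < Real.exp (t/2) := Real.exp_pos _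
        have hY : (0:ℝ) < (N:ℝ)^(β*(1-2*γ)) := Real.rpow_pos_of_pos hNpos _
        rw [Real.exp_neg, Real.rpow_neg hNpos.le, ← div_eq_mul_inv, ← div_eq_mul_inv,
          div_le_div_iff₀ hE hY]
        calc (N:ℝ)^β * (N:ℝ)^(β*(1-2*γ)) = t ^ (2*d) := hid
          _ ≤ (2:ℝ)^(2*d) * (((2*d).factorial:ℝ) * Real.exp (t/2)) := hpow
          _ = (2:ℝ)^(2*d) * (((2*d).factorial:ℝ)) * Real.exp (t/2) := by ring
      have hfinal : VN d β N z * r ^ γ ≤ (A * B) * (N:ℝ)^(-(β*(1-2*γ))) := by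
        calc VN d β N z * r ^ γ
            ≤ A * (d:ℝ) * ((N:ℝ)^β * Real.exp (-(a*r)/2)) := hmain
          _ ≤ A * (d:ℝ) * ((N:ℝ)^β * Real.exp (-(t/2))) := by
              apply mul_le_mul_of_nonneg_left _ (by positivity)
              exact mul_le_mul_of_nonneg_left hexp hNb
          _ ≤ A * (d:ℝ) * ((2:ℝ)^(2*d) * (((2*d).factorial:ℝ)) * (N:ℝ)^(-(β*(1-2*γ)))) := by
              apply mul_le_mul_of_nonneg_left hN2 (by positivity)
          _ = (A * B) * (N:ℝ)^(-(β*(1-2*γ))) := by rw [hB]; push_cast; ring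
      have h4 : 0 ≤ (N:ℝ) ^ (-(β * γ^2 / (d:ℝ))) * VN d β N z :=
        mul_nonneg (Real.rpow_nonneg hNpos.le _) hVN0
      have h5 : (A * B) * (N:ℝ)^(-(β*(1-2*γ))) ≤ (A * B + 1) * (N:ℝ)^(-(β*(1-2*γ))) :=
        mul_le_mul_of_nonneg_right (by linarith) (Real.rpow_nonneg hNpos.le _)
      linarith
  have hNne : (N:ℝ) ≠ 0 := ne_of_gt hNpos
  calc (1/(N:ℝ)) * ∑ i, VN d β N (x - p i) * torusDist d x (p i) ^ γ
      ≤ (1/(N:ℝ)) * ∑ i, ((A * B + 1) * (N:ℝ) ^ (-(β * (1 - 2*γ)))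
          + (N:ℝ) ^ (-(β * γ^2 / (d:ℝ))) * VN d β N (x - p i)) := by
        apply mul_le_mul_of_nonneg_left (Finset.sum_le_sum fun i _ => key i) (by positivity)
    _ = (A * B + 1) * (N:ℝ) ^ (-(β * (1 - 2*γ)))
        + (N:ℝ) ^ (-(β * γ^2 / (d:ℝ))) * ((1/(N:ℝ)) * ∑ i, VN d β N (x - p i)) := by
        rw [Finset.sum_add_distrib, Finset.sum_const, ← Finset.mul_sum, Finset.card_univ,
          Fintype.card_fin, nsmul_eq_mul]
        field_simp
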